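/- Let p, q, r, s ∈ ℝ with p ≤ r and q ≥ s, and let (c_{jk})_{j,k≥1} be real numbers such that for some M ≥ 0 and for every j ≥ 1, Σ_{k≥1} (1+λ_k)^{q} c_{jk}² ≤ M² (1+λ_j)^{p−(d−1)}. Then for all integers J, K ≥ 1, the tail sum satisfies (Σ_{(j,k): j>J or k>K} (1+λ_j)^{−r} (1+λ_k)^{s} c_{jk}²)^{1/2} ≤ C M max((1 + J^{1/(d−1)})^{p−r}, (1 + K^{1/(d−1)})^{s−q}) for a constant C > 0 depending only on d, C₁, C₂ and the differences r − p and q − s. -/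

import Mathlib

/-! The weight `(1 + λ_j)^(-r) (1 + λ_k)^s` factors as `(1 + λ_j)^(p - r) (1 + λ_k)^(s - q)` times
`(1 + λ_j)^(-p) (1 + λ_k)^q`. Summing the second factor over `k` with the row hypothesis leaves
`M² (1 + λ_j)^(-(d - 1)) ≤ M² C₁^(1 - d) (j + 1)^(-2)` by Weyl's law, and this sums over `j` to
`M² C₁^(1 - d) ζ(2)`. On the tail, `j ≥ J` (or `k ≥ K`) and Weyl's law give
`(1 + J^(1/(d-1)))² ≲ 1 + λ_j`, so the first factor is bounded by a constant times the square of
the claimed maximum, the other power being at most `1`. -/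

section

open Real

theorem hasSum_inv_succ_sq : HasSum (fun n : ℕ => (((n : ℝ) + 1) ^ 2)⁻¹) (π ^ 2 / 6) := by
  simpa [one_div] using (hasSum_nat_add_iff' 1).mpr hasSum_zeta_two

theorem tsum_ofReal_inv_succ_sq :
    ∑' n : ℕ, ENNReal.ofReal (((n : ℝ) + 1) ^ 2)⁻¹ = ENNReal.ofReal (π ^ 2 / 6) := by
  rw [← ENNReal.ofReal_tsum_of_nonneg (fun n => by positivity) hasSum_inv_succ_sq.summable,
    hasSum_inv_succ_sq.tsum_eq]

theorem one_add_sq_le_of_mul_sq_le {C₁ t x : ℝ} (hC₁ : 0 < C₁) (hx : C₁ * t ^ 2 ≤ x) :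
    (1 + t) ^ 2 ≤ 2 * max 1 C₁⁻¹ * (1 + x) := by
  have ht : t ^ 2 ≤ C₁⁻¹ * x := by rwa [← div_eq_inv_mul, le_div_iff₀' hC₁]
  have hx0 : 0 ≤ x := (by positivity : 0 ≤ C₁ * t ^ 2).trans hx
  have hm : C₁⁻¹ * x ≤ max 1 C₁⁻¹ * x := mul_le_mul_of_nonneg_right (le_max_right _ _) hx0
  -- `(1 + t)² ≤ 2 (1 + t²)`
  nlinarith [le_max_left 1 C₁⁻¹, sq_nonneg (1 - t)]

theorem one_add_rpow_neg_le_of_mul_sq_le {C₁ t x u : ℝ} (hC₁ : 0 < C₁) (ht : 0 ≤ t)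
    (hx : C₁ * t ^ 2 ≤ x) (hu : 0 ≤ u) :
    (1 + x) ^ (-u) ≤ (2 * max 1 C₁⁻¹) ^ u * ((1 + t) ^ (-u)) ^ 2 := by
  set c₀ := 2 * max 1 C₁⁻¹
  have hc₀ : 0 < c₀ := by positivity
  have hx0 : 0 ≤ x := (by positivity : 0 ≤ C₁ * t ^ 2).trans hx
  calc (1 + x) ^ (-u) = c₀ ^ u * (c₀ * (1 + x)) ^ (-u) := by
        rw [mul_rpow hc₀.le (by positivity), rpow_neg hc₀.le, mul_inv_cancel_left₀ (by positivity)]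
    _ ≤ c₀ ^ u * ((1 + t) ^ 2) ^ (-u) := by
        gcongr ?_ * ?_
        exact rpow_le_rpow_of_nonpos (by positivity) (one_add_sq_le_of_mul_sq_le hC₁ hx)
          (neg_nonpos.2 hu)
    _ = c₀ ^ u * ((1 + t) ^ (-u)) ^ 2 := by
        rw [← rpow_natCast, ← rpow_natCast, ← rpow_mul (by positivity), ← rpow_mul (by positivity),
          mul_comm ((2 : ℕ) : ℝ)]

theorem one_add_rpow_neg_le_inv_sq {C₁ e x y : ℝ} (he : 0 < e) (hC₁ : 0 < C₁) (hy : 0 < y)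
    (hx : C₁ * y ^ (2 / e) ≤ x) :
    (1 + x) ^ (-e) ≤ C₁ ^ (-e) * (y ^ 2)⁻¹ := by
  calc (1 + x) ^ (-e) ≤ (C₁ * y ^ (2 / e)) ^ (-e) :=
        rpow_le_rpow_of_nonpos (by positivity) (by linarith) (by linarith)
    _ = C₁ ^ (-e) * (y ^ 2)⁻¹ := by
        rw [mul_rpow hC₁.le (by positivity), ← rpow_mul hy.le, ← rpow_two, ← rpow_neg hy.le]
        congr 2
        field_simp

variable {e C₁ : ℝ} {lam : ℕ → ℝ}

theorem one_le_one_add_of_weyl (hC₁ : 0 < C₁)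
    (hlam : ∀ k : ℕ, C₁ * ((k : ℝ) + 1) ^ (2 / e) ≤ lam k) (k : ℕ) : 1 ≤ 1 + lam k :=
  le_add_of_nonneg_right ((by positivity : 0 ≤ C₁ * _).trans (hlam k))

theorem one_add_rpow_neg_le_of_le (he : 0 ≤ e) (hC₁ : 0 < C₁)
    (hlam : ∀ k : ℕ, C₁ * ((k : ℝ) + 1) ^ (2 / e) ≤ lam k) {u : ℝ} (hu : 0 ≤ u) {N j : ℕ}
    (hNj : N ≤ j) :
    (1 + lam j) ^ (-u) ≤ (2 * max 1 C₁⁻¹) ^ u * ((1 + (N : ℝ) ^ (1 / e)) ^ (-u)) ^ 2 := by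
  refine one_add_rpow_neg_le_of_mul_sq_le hC₁ (by positivity) ((?_ : _ ≤ _).trans (hlam j)) hu
  rw [← rpow_natCast, ← rpow_mul (Nat.cast_nonneg N), one_div_mul_eq_div, Nat.cast_ofNat]
  have hNj' : (N : ℝ) ≤ j + 1 := by exact_mod_cast hNj.trans (Nat.le_succ j)
  gcongr

theorem rpow_neg_mul_rpow_neg_le (he : 0 ≤ e) (hC₁ : 0 < C₁)
    (hlam : ∀ k : ℕ, C₁ * ((k : ℝ) + 1) ^ (2 / e) ≤ lam k) {u v : ℝ} (hu : 0 ≤ u) (hv : 0 ≤ v)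
    {J K j k : ℕ} (h : J ≤ j ∨ K ≤ k) :
    (1 + lam j) ^ (-u) * (1 + lam k) ^ (-v) ≤
      max ((2 * max 1 C₁⁻¹) ^ u) ((2 * max 1 C₁⁻¹) ^ v) *
        max ((1 + (J : ℝ) ^ (1 / e)) ^ (-u)) ((1 + (K : ℝ) ^ (1 / e)) ^ (-v)) ^ 2 := by
  have hw := one_le_one_add_of_weyl hC₁ hlam
  have hle_one (i : ℕ) {z : ℝ} (hz : 0 ≤ z) : (1 + lam i) ^ (-z) ≤ 1 :=
    rpow_le_one_of_one_le_of_nonpos (hw i) (by linarith)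
  rcases h with hJ | hK
  · calc (1 + lam j) ^ (-u) * (1 + lam k) ^ (-v) ≤ (1 + lam j) ^ (-u) :=
          mul_le_of_le_one_right (rpow_nonneg (by linarith [hw j]) _) (hle_one k hv)
      _ ≤ _ := (one_add_rpow_neg_le_of_le he hC₁ hlam hu hJ).trans (by gcongr <;> simp)
  · calc (1 + lam j) ^ (-u) * (1 + lam k) ^ (-v) ≤ (1 + lam k) ^ (-v) :=
          mul_le_of_le_one_left (rpow_nonneg (by linarith [hw k]) _) (hle_one j hu)
      _ ≤ _ := (one_add_rpow_neg_le_of_le he hC₁ hlam hv hK).trans (by gcongr <;> simp)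

theorem tsum_weighted_le (he : 0 < e) (hC₁ : 0 < C₁)
    (hlam : ∀ k : ℕ, C₁ * ((k : ℝ) + 1) ^ (2 / e) ≤ lam k) {p q M : ℝ} {c : ℕ → ℕ → ℝ}
    (hrow : ∀ j : ℕ, ∑' k : ℕ, ENNReal.ofReal ((1 + lam k) ^ q * c j k ^ 2)
      ≤ ENNReal.ofReal (M ^ 2 * (1 + lam j) ^ (p - e))) :
    ∑' jk : ℕ × ℕ, ENNReal.ofReal ((1 + lam jk.1) ^ (-p) * ((1 + lam jk.2) ^ q * c jk.1 jk.2 ^ 2))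
      ≤ ENNReal.ofReal (M ^ 2 * C₁ ^ (-e) * (π ^ 2 / 6)) := by
  have hw (i : ℕ) : 0 < 1 + lam i := one_pos.trans_le (one_le_one_add_of_weyl hC₁ hlam i)
  rw [ENNReal.tsum_prod']
  calc _ ≤ ∑' j : ℕ,
        ENNReal.ofReal (M ^ 2 * C₁ ^ (-e)) * ENNReal.ofReal (((j : ℝ) + 1) ^ 2)⁻¹ := by
        refine ENNReal.tsum_le_tsum fun j => ?_
        calc _ = ENNReal.ofReal ((1 + lam j) ^ (-p)) *
                ∑' k, ENNReal.ofReal ((1 + lam k) ^ q * c j k ^ 2) := by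
              simp_rw [ENNReal.ofReal_mul (rpow_nonneg (hw j).le _)]
              exact ENNReal.tsum_mul_left
          _ ≤ ENNReal.ofReal ((1 + lam j) ^ (-p)) *
                ENNReal.ofReal (M ^ 2 * (1 + lam j) ^ (p - e)) := by
              gcongr
              exact hrow j
          _ = ENNReal.ofReal (M ^ 2 * (1 + lam j) ^ (-e)) := by
              rw [← ENNReal.ofReal_mul (rpow_nonneg (hw j).le _), mul_left_comm,
                ← rpow_add (hw j), show -p + (p - e) = -e by ring]
          _ ≤ ENNReal.ofReal (M ^ 2 * (C₁ ^ (-e) * (((j : ℝ) + 1) ^ 2)⁻¹)) := by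
              gcongr
              exact one_add_rpow_neg_le_inv_sq he hC₁ (by positivity) (hlam j)
          _ = _ := by rw [← ENNReal.ofReal_mul (by positivity), mul_assoc]
    _ = _ := by
        rw [ENNReal.tsum_mul_left, tsum_ofReal_inv_succ_sq, ← ENNReal.ofReal_mul (by positivity)]

theorem tsum_tail_le_of_le (he : 0 < e) (hC₁ : 0 < C₁)
    (hlam : ∀ k : ℕ, C₁ * ((k : ℝ) + 1) ^ (2 / e) ≤ lam k) {p q r s M κ : ℝ} {c : ℕ → ℕ → ℝ}
    (hrow : ∀ j : ℕ, ∑' k : ℕ, ENNReal.ofReal ((1 + lam k) ^ q * c j k ^ 2)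
      ≤ ENNReal.ofReal (M ^ 2 * (1 + lam j) ^ (p - e))) {J K : ℕ}
    (hκ : ∀ j k : ℕ, J ≤ j ∨ K ≤ k → (1 + lam j) ^ (p - r) * (1 + lam k) ^ (s - q) ≤ κ) :
    ∑' jk : ℕ × ℕ, (if J ≤ jk.1 ∨ K ≤ jk.2 then
        ENNReal.ofReal ((1 + lam jk.1) ^ (-r) * (1 + lam jk.2) ^ s * c jk.1 jk.2 ^ 2) else 0)
      ≤ ENNReal.ofReal (κ * (M ^ 2 * C₁ ^ (-e) * (π ^ 2 / 6))) := by
  have hw (i : ℕ) : 0 < 1 + lam i := one_pos.trans_le (one_le_one_add_of_weyl hC₁ hlam i)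
  have hκ_nonneg : 0 ≤ κ :=
    (mul_nonneg (rpow_nonneg (hw J).le _) (rpow_nonneg (hw 0).le _)).trans (hκ J 0 (.inl le_rfl))
  have hsplit (j k : ℕ) : (1 + lam j) ^ (-r) * (1 + lam k) ^ s * c j k ^ 2 =
      (1 + lam j) ^ (p - r) * (1 + lam k) ^ (s - q) *
        ((1 + lam j) ^ (-p) * ((1 + lam k) ^ q * c j k ^ 2)) := by
    rw [show -r = (p - r) + -p by ring, show s = (s - q) + q by ring, rpow_add (hw j),
      rpow_add (hw k), sub_add_cancel]
    ring
  calc _ ≤ ∑' jk : ℕ × ℕ, ENNReal.ofReal κ *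
        ENNReal.ofReal ((1 + lam jk.1) ^ (-p) * ((1 + lam jk.2) ^ q * c jk.1 jk.2 ^ 2)) := by
        refine ENNReal.tsum_le_tsum fun ⟨j, k⟩ => ?_
        split_ifs with htail
        · rw [← ENNReal.ofReal_mul hκ_nonneg, hsplit]
          have hbase : 0 ≤ (1 + lam j) ^ (-p) * ((1 + lam k) ^ q * c j k ^ 2) := by
            have := rpow_nonneg (hw j).le (-p)
            have := rpow_nonneg (hw k).le q
            positivity
          exact ENNReal.ofReal_le_ofReal (mul_le_mul_of_nonneg_right (hκ j k htail) hbase)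
        · exact bot_le
    _ ≤ ENNReal.ofReal κ * ENNReal.ofReal (M ^ 2 * C₁ ^ (-e) * (π ^ 2 / 6)) := by
        rw [ENNReal.tsum_mul_left]
        gcongr
        exact tsum_weighted_le he hC₁ hlam hrow
    _ = _ := (ENNReal.ofReal_mul hκ_nonneg).symm

end

theorem stmt_6_general (d : ℕ) (hd : 2 ≤ d) (C₁ C₂ : ℝ) (hC₁ : 0 < C₁)
    (a b : ℝ) :
    ∃ C : ℝ, 0 < C ∧
      ∀ lam : ℕ → ℝ,
        (∀ k : ℕ, C₁ * ((k : ℝ) + 1) ^ (2 / ((d : ℝ) - 1)) ≤ lam k ∧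
            lam k ≤ C₂ * ((k : ℝ) + 1) ^ (2 / ((d : ℝ) - 1))) →
        ∀ p q r s : ℝ, p ≤ r → s ≤ q → r - p = a → q - s = b →
        ∀ M : ℝ, 0 ≤ M →
        ∀ c : ℕ → ℕ → ℝ,
          (∀ j : ℕ, ∑' k : ℕ, ENNReal.ofReal ((1 + lam k) ^ q * c j k ^ 2)
              ≤ ENNReal.ofReal (M ^ 2 * (1 + lam j) ^ (p - ((d : ℝ) - 1)))) →
          ∀ J K : ℕ, 1 ≤ J → 1 ≤ K →
            (∑' jk : ℕ × ℕ,
                if J ≤ jk.1 ∨ K ≤ jk.2 then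
                  ENNReal.ofReal
                    ((1 + lam jk.1) ^ (-r) * (1 + lam jk.2) ^ s * c jk.1 jk.2 ^ 2)
                else 0) ^ ((1 : ℝ) / 2)
              ≤ ENNReal.ofReal (C * M *
                  max ((1 + (J : ℝ) ^ (1 / ((d : ℝ) - 1))) ^ (p - r))
                    ((1 + (K : ℝ) ^ (1 / ((d : ℝ) - 1))) ^ (s - q))) := by
  have he : (0 : ℝ) < d - 1 := by
    have : (2 : ℝ) ≤ d := by exact_mod_cast hd
    linarith
  refine ⟨√(max ((2 * max 1 C₁⁻¹) ^ a) ((2 * max 1 C₁⁻¹) ^ b) *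
    (C₁ ^ (-((d : ℝ) - 1)) * (Real.pi ^ 2 / 6))), by positivity, ?_⟩
  intro lam hlam p q r s hpr hsq hrp hqs M hM c hrow J K _ _
  subst hrp hqs
  rw [one_div, ENNReal.rpow_inv_le_iff two_pos, ENNReal.rpow_two,
    ← ENNReal.ofReal_pow (by positivity)]
  have hlam₁ (k : ℕ) := (hlam k).1
  have hfactor (j k : ℕ) (htail : J ≤ j ∨ K ≤ k) :=
    rpow_neg_mul_rpow_neg_le he.le hC₁ hlam₁ (sub_nonneg.2 hpr) (sub_nonneg.2 hsq) htail
  simp only [neg_sub] at hfactor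
  refine (tsum_tail_le_of_le he hC₁ hlam₁ hrow hfactor).trans_eq ?_
  rw [mul_pow, mul_pow, Real.sq_sqrt (by positivity)]
  congr 1
  ring

/-- Coefficient form of the second part of Lemma B.2: under the same row-sum operator-norm
hypothesis as in the first part, the tail of the weighted Hilbert–Schmidt norm beyond the
finite-rank projection onto indices `j ≤ J`, `k ≤ K` (0-based: `jk.1 < J`, `jk.2 < K`) is
bounded by `C·M·max((1+J^{1/(d-1)})^{p-r}, (1+K^{1/(d-1)})^{s-q})`, with `C` depending
only on `d`, `C₁`, `C₂` and the differences `a = r − p`, `b = q − s`. Here `lam k` stands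
for the eigenvalue `λ_{k+1}` (0-based indexing), satisfying the Weyl-law two-sided bound. -/
theorem stmt_6 (d : ℕ) (hd : 2 ≤ d) (C₁ C₂ : ℝ) (hC₁ : 0 < C₁) (hC₂ : 0 < C₂)
    (a b : ℝ) :
    ∃ C : ℝ, 0 < C ∧
      ∀ lam : ℕ → ℝ,
        (∀ k : ℕ, C₁ * ((k : ℝ) + 1) ^ (2 / ((d : ℝ) - 1)) ≤ lam k ∧
            lam k ≤ C₂ * ((k : ℝ) + 1) ^ (2 / ((d : ℝ) - 1))) →
        ∀ p q r s : ℝ, p ≤ r → s ≤ q → r - p = a → q - s = b →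
        ∀ M : ℝ, 0 ≤ M →
        ∀ c : ℕ → ℕ → ℝ,
          (∀ j : ℕ, ∑' k : ℕ, ENNReal.ofReal ((1 + lam k) ^ q * c j k ^ 2)
              ≤ ENNReal.ofReal (M ^ 2 * (1 + lam j) ^ (p - ((d : ℝ) - 1)))) →
          ∀ J K : ℕ, 1 ≤ J → 1 ≤ K →
            (∑' jk : ℕ × ℕ,
                if J ≤ jk.1 ∨ K ≤ jk.2 then
                  ENNReal.ofReal
                    ((1 + lam jk.1) ^ (-r) * (1 + lam jk.2) ^ s * c jk.1 jk.2 ^ 2)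
                else 0) ^ ((1 : ℝ) / 2)
              ≤ ENNReal.ofReal (C * M *
                  max ((1 + (J : ℝ) ^ (1 / ((d : ℝ) - 1))) ^ (p - r))
                    ((1 + (K : ℝ) ^ (1 / ((d : ℝ) - 1))) ^ (s - q))) :=
  stmt_6_general d hd C₁ C₂ hC₁ a b
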